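/- arXiv:1803.09291 — 6 statements merged into one kernel-verified Lean document; each statement's English description precedes it below -/
import Mathlib

section
/- Let p be a prime and A a p-primary torsion abelian group of cofinite type. Then A is artinian: every decreasing sequence A ⊇ A₀ ⊇ A₁ ⊇ ⋯ of subgroups of A stabilizes. -/
/-!
For a subgroup `B` and `k : ℕ`, the elements of `B[p]` divisible by `p ^ k` in `B` form a subgroup
of the finite group `A[p]`, decreasing in `k` and increasing in `B`. Along a decreasing chain `C n`
the diagonal `n ↦ (C n)[p] ∩ p ^ n C n` therefore stabilizes, and from some `n₀` on these subgroups
agree for all `C m` and all `k ≥ n₀`. When they agree for `C m ≤ C n`, every element of `C n` killed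
by `p ^ (k + 1)` differs from an element of `C m` by one of `C n` killed by `p ^ k`. Descending the
torsion filtration gives `C n ≤ C m + (C n ∩ A[p ^ n₀])`, and the finite intersections
`C n ∩ A[p ^ n₀]` stabilize too.
-/

open Submodule

namespace Submodule

variable {R M : Type*} [CommRing R] [AddCommGroup M] [Module R M]

theorem exists_forall_ge_eq_of_antitone_of_le {N : Submodule R M} [IsArtinian R N]
    {f : ℕ → Submodule R M} (hf : Antitone f) (hle : ∀ n, f n ≤ N) :
    ∃ n, ∀ m, n ≤ m → f m = f n := by
  let g : ℕ →o (Submodule R N)ᵒᵈ :=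
    ⟨fun n => OrderDual.toDual ((f n).comap N.subtype), fun _ _ h => comap_mono (hf h)⟩
  obtain ⟨n, hn⟩ := IsArtinian.monotone_stabilizes g
  refine ⟨n, fun m hm => ?_⟩
  have hcomap : (f m).comap N.subtype = (f n).comap N.subtype := (hn m hm).symm
  rw [← inf_eq_right.2 (hle m), ← inf_eq_right.2 (hle n), ← map_comap_subtype,
    ← map_comap_subtype, hcomap]

theorem torsionBy_pow_mono (r : R) {j k : ℕ} (h : j ≤ k) :
    torsionBy R M (r ^ j) ≤ torsionBy R M (r ^ k) :=
  torsionBy_le_torsionBy_of_dvd _ _ (pow_dvd_pow r h)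

theorem isArtinian_torsionBy_pow (r : R) [IsArtinian R (torsionBy R M r)] (k : ℕ) :
    IsArtinian R (torsionBy R M (r ^ k)) := by
  induction k with
  | zero => exact isArtinian_of_le (t := torsionBy R M r) (torsionBy_le_torsionBy_of_dvd _ _ (by simp))
  | succ k ih =>
    -- `torsionBy (r ^ k) → torsionBy (r ^ (k + 1)) → torsionBy r` is exact, the second map being
    -- multiplication by `r ^ k`.
    let g : torsionBy R M (r ^ (k + 1)) →ₗ[R] torsionBy R M r :=
      (LinearMap.lsmul R M (r ^ k)).restrict fun x hx => by
        rw [mem_torsionBy_iff] at hx ⊢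
        rwa [LinearMap.lsmul_apply, smul_smul, ← pow_succ']
    refine isArtinian_of_range_eq_ker (inclusion (torsionBy_pow_mono r k.le_succ)) g ?_
    ext x
    simp [g, range_inclusion, LinearMap.restrict_apply, mem_torsionBy_iff]

/-- The elements of the `r`-torsion of `B` that are divisible by `r ^ k` in `B`. -/
def divisibleSocle (r : R) (B : Submodule R M) (k : ℕ) : Submodule R M :=
  (B ⊓ torsionBy R M (r ^ (k + 1))).map (LinearMap.lsmul R M (r ^ k))

variable {r : R} {B D : Submodule R M} {k : ℕ}

theorem mem_divisibleSocle {x : M} :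
    x ∈ divisibleSocle r B k ↔ ∃ y ∈ B, r ^ (k + 1) • y = 0 ∧ r ^ k • y = x := by
  simp [divisibleSocle, mem_torsionBy_iff, and_assoc]

theorem divisibleSocle_le_torsionBy : divisibleSocle r B k ≤ torsionBy R M r := by
  intro x hx
  obtain ⟨y, -, hy, rfl⟩ := mem_divisibleSocle.1 hx
  rwa [mem_torsionBy_iff, smul_smul, ← pow_succ']

theorem divisibleSocle_mono (h : D ≤ B) : divisibleSocle r D k ≤ divisibleSocle r B k :=
  map_mono (inf_le_inf_right _ h)

theorem divisibleSocle_antitone : Antitone (divisibleSocle r B) := by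
  refine antitone_nat_of_succ_le fun k x hx => ?_
  obtain ⟨y, hyB, hy, rfl⟩ := mem_divisibleSocle.1 hx
  refine mem_divisibleSocle.2 ⟨r • y, B.smul_mem r hyB, ?_, ?_⟩
  · rwa [smul_smul, ← pow_succ]
  · rw [smul_smul, ← pow_succ]

-- The diagonal `n ↦ divisibleSocle r (C n) n` stabilizes and bounds `divisibleSocle r (C m) k`
-- from both sides.
theorem exists_divisibleSocle_eq_of_antitone [IsArtinian R (torsionBy R M r)]
    {C : ℕ → Submodule R M} (hC : Antitone C) :
    ∃ n₀, ∀ m k, n₀ ≤ m → n₀ ≤ k → divisibleSocle r (C m) k = divisibleSocle r (C n₀) n₀ := by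
  have hdiag : Antitone fun n => divisibleSocle r (C n) n := fun _ _ h =>
    (divisibleSocle_antitone h).trans (divisibleSocle_mono (hC h))
  obtain ⟨n₀, hn₀⟩ :=
    exists_forall_ge_eq_of_antitone_of_le hdiag fun _ => divisibleSocle_le_torsionBy
  refine ⟨n₀, fun m k hm hk => le_antisymm ?_ ?_⟩
  · exact (divisibleSocle_antitone hk).trans (divisibleSocle_mono (hC hm))
  · calc divisibleSocle r (C n₀) n₀ = divisibleSocle r (C (max m k)) (max m k) :=
          (hn₀ _ (hm.trans (le_max_left m k))).symm
      _ ≤ divisibleSocle r (C m) (max m k) := divisibleSocle_mono (hC (le_max_left m k))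
      _ ≤ divisibleSocle r (C m) k := divisibleSocle_antitone (le_max_right m k)

theorem inf_torsionBy_succ_le_of_divisibleSocle_le (hDB : D ≤ B)
    (h : divisibleSocle r B k ≤ divisibleSocle r D k) :
    B ⊓ torsionBy R M (r ^ (k + 1)) ≤ D ⊔ (B ⊓ torsionBy R M (r ^ k)) := by
  rintro x ⟨hxB, hx⟩
  rw [SetLike.mem_coe, mem_torsionBy_iff] at hx
  obtain ⟨y, hyD, -, hy⟩ := mem_divisibleSocle.1 (h (mem_divisibleSocle.2 ⟨x, hxB, hx, rfl⟩))
  refine mem_sup.2 ⟨y, hyD, x - y, ⟨B.sub_mem hxB (hDB hyD), ?_⟩, add_sub_cancel y x⟩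
  rw [SetLike.mem_coe, mem_torsionBy_iff, smul_sub, hy, sub_self]

theorem le_sup_inf_torsionBy_of_divisibleSocle_le (hM : ∀ x : M, ∃ k, r ^ k • x = 0)
    (hDB : D ≤ B) {n : ℕ} (h : ∀ k, n ≤ k → divisibleSocle r B k ≤ divisibleSocle r D k) :
    B ≤ D ⊔ (B ⊓ torsionBy R M (r ^ n)) := by
  have descend : ∀ j, B ⊓ torsionBy R M (r ^ (n + j)) ≤ D ⊔ (B ⊓ torsionBy R M (r ^ n)) := by
    intro j
    induction j with
    | zero => exact le_sup_right
    | succ j ih =>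
      calc B ⊓ torsionBy R M (r ^ (n + j + 1))
          ≤ D ⊔ (B ⊓ torsionBy R M (r ^ (n + j))) :=
            inf_torsionBy_succ_le_of_divisibleSocle_le hDB (h _ (n.le_add_right j))
        _ ≤ D ⊔ (B ⊓ torsionBy R M (r ^ n)) := sup_le le_sup_left ih
  intro x hxB
  obtain ⟨j, hj⟩ := hM x
  exact descend j ⟨hxB, torsionBy_pow_mono r (j.le_add_left n) ((mem_torsionBy_iff _ _).2 hj)⟩

theorem isArtinian_of_isArtinian_torsionBy (r : R) (hM : ∀ x : M, ∃ k, r ^ k • x = 0)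
    [IsArtinian R (torsionBy R M r)] : IsArtinian R M := by
  refine monotone_stabilizes_iff_artinian.1 fun f => ?_
  set C : ℕ → Submodule R M := fun n => OrderDual.ofDual (f n)
  have hC : Antitone C := fun _ _ h => f.monotone h
  obtain ⟨n₀, hn₀⟩ := exists_divisibleSocle_eq_of_antitone (M := M) (r := r) hC
  have := isArtinian_torsionBy_pow (M := M) r n₀
  obtain ⟨n₁, hn₁⟩ := exists_forall_ge_eq_of_antitone_of_le
    (f := fun n => C n ⊓ torsionBy R M (r ^ n₀)) (fun _ _ h => inf_le_inf_right _ (hC h))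
    fun _ => inf_le_right
  refine ⟨max n₀ n₁, fun m hm => show C _ = C m from le_antisymm ?_ (hC hm)⟩
  have hsocle : ∀ k, n₀ ≤ k →
      divisibleSocle r (C (max n₀ n₁)) k ≤ divisibleSocle r (C m) k := fun k hk => by
    rw [hn₀ _ _ (le_max_left n₀ n₁) hk, hn₀ _ _ ((le_max_left n₀ n₁).trans hm) hk]
  have htorsion : C (max n₀ n₁) ⊓ torsionBy R M (r ^ n₀) ≤ C m := by
    rw [hn₁ _ (le_max_right n₀ n₁), ← hn₁ _ ((le_max_right n₀ n₁).trans hm)]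
    exact inf_le_left
  exact (le_sup_inf_torsionBy_of_divisibleSocle_le hM (hC hm) hsocle).trans
    (sup_le le_rfl htorsion)

end Submodule

theorem stmt_4_general (p : ℕ) (A : Type*) [AddCommGroup A]
    (hprim : ∀ a : A, ∃ n : ℕ, ((p : ℤ) ^ n) • a = 0)
    (hcof : ∀ n : ℕ, Finite ((smulAddHom ℤ A ((p : ℤ) ^ n)).ker))
    (C : ℕ → AddSubgroup A) (hdec : ∀ n, C (n + 1) ≤ C n) :
    ∃ n, ∀ m, n ≤ m → C m = C n := by
  have : Finite (torsionBy ℤ A (p : ℤ)) :=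
    Finite.of_injective (fun x => (⟨x, by simp⟩ : (smulAddHom ℤ A ((p : ℤ) ^ 1)).ker))
      fun _ _ h => Subtype.ext (by simpa using h)
  have : IsArtinian ℤ (torsionBy ℤ A (p : ℤ)) := isArtinian_of_finite
  have := isArtinian_of_isArtinian_torsionBy (p : ℤ) hprim
  let f : ℕ →o (Submodule ℤ A)ᵒᵈ := ⟨fun n => OrderDual.toDual (C n).toIntSubmodule,
    fun _ _ h => AddSubgroup.toIntSubmodule.monotone (antitone_nat_of_succ_le hdec h)⟩
  obtain ⟨n, hn⟩ := IsArtinian.monotone_stabilizes f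
  exact ⟨n, fun m hm => AddSubgroup.toIntSubmodule.injective (hn m hm).symm⟩

/-- A `p`-primary torsion abelian group of cofinite type is artinian: every
decreasing sequence of subgroups stabilizes. -/
theorem stmt_4 (p : ℕ) (hp : p.Prime) (A : Type*) [AddCommGroup A]
    (hprim : ∀ a : A, ∃ n : ℕ, ((p : ℤ) ^ n) • a = 0)
    (hcof : ∀ n : ℕ, Finite ((smulAddHom ℤ A ((p : ℤ) ^ n)).ker))
    (C : ℕ → AddSubgroup A) (hdec : ∀ n, C (n + 1) ≤ C n) :
    ∃ n, ∀ m, n ≤ m → C m = C n :=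
  stmt_4_general p A hprim hcof C hdec
end

section
/- Let B be an abelian group and consider the inverse system indexed by the positive integers ordered by divisibility, whose objects are all equal to B and whose transition map from the index mn to the index n is multiplication by m. This system satisfies the Mittag-Leffler condition if and only if B has a divisible subgroup B' such that B/B' is killed by multiplication by some positive integer. -/
/-! The image of the index-`jk` copy of `B` in the index-`1` copy is `jkB`, so the
Mittag-Leffler condition amounts to: some `jB` equals `jkB` for every `k`. Such a `jB` is
divisible (write `x = jb = jk c`, then `x = k (j c)`) and `B/jB` is killed by `j`. Conversely,
if `B'` is divisible and `N B ⊆ B'`, then every `N b` lies in `B'` and so is an `Nk`-multiple,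
whence `NB = NkB` for all `k`. -/

section

variable {B : Type*} [AddCommGroup B]

theorem range_smulAddHom_mul_le (m k : ℤ) :
    (smulAddHom ℤ B (m * k)).range ≤ (smulAddHom ℤ B m).range := by
  rintro _ ⟨b, rfl⟩
  exact ⟨k • b, (mul_smul m k b).symm⟩

theorem exists_mem_range_smul_eq_of_range_smulAddHom_mul_eq {j n : ℤ}
    (hstable : (smulAddHom ℤ B (j * n)).range = (smulAddHom ℤ B j).range) {x : B}
    (hx : x ∈ (smulAddHom ℤ B j).range) : ∃ y ∈ (smulAddHom ℤ B j).range, n • y = x := by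
  rw [← hstable] at hx
  obtain ⟨c, rfl⟩ := hx
  exact ⟨j • c, ⟨c, rfl⟩, by simp only [smulAddHom_apply, smul_smul, mul_comm]⟩

theorem range_smulAddHom_mul_eq_of_smul_mem_of_divisible {B' : AddSubgroup B} {N k : ℤ}
    (hNB : ∀ b : B, N • b ∈ B') (hdiv : ∀ x ∈ B', ∃ y : B, (N * k) • y = x) :
    (smulAddHom ℤ B (N * k)).range = (smulAddHom ℤ B N).range :=
  le_antisymm (range_smulAddHom_mul_le N k) (by
    rintro _ ⟨b, rfl⟩
    exact hdiv _ (hNB b))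

end

/-- For an abelian group `B`, consider the inverse system indexed by positive
integers ordered by divisibility, all of whose objects are `B`, with transition map from index
`m*n` to index `n` given by multiplication by `m`. The image in the index-`i` copy of `B` of the
map from the index `i*m` is `mB`, so the Mittag-Leffler condition says: for each index, the
images `jB` stabilize along divisibility. This holds iff `B` has a divisible subgroup `B'`
with `B/B'` killed by multiplication by some positive integer. -/
theorem stmt_10 (B : Type*) [AddCommGroup B] :
    (∀ i : ℕ, 0 < i → ∃ j : ℕ, 0 < j ∧ ∀ k : ℕ, 0 < k →
      (smulAddHom ℤ B ((j * k : ℕ) : ℤ)).range = (smulAddHom ℤ B ((j : ℕ) : ℤ)).range) ↔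
    ∃ B' : AddSubgroup B, (∀ n : ℕ, 0 < n → ∀ x ∈ B', ∃ y ∈ B', (n : ℤ) • y = x) ∧
      ∃ N : ℕ, 0 < N ∧ ∀ b : B, (N : ℤ) • b ∈ B' := by
  constructor
  · intro hML
    obtain ⟨j, hj, hstable⟩ := hML 1 one_pos
    refine ⟨(smulAddHom ℤ B j).range, fun n hn x hx => ?_, j, hj, fun b => ⟨b, rfl⟩⟩
    exact exists_mem_range_smul_eq_of_range_smulAddHom_mul_eq
      (by exact_mod_cast hstable n hn) hx
  · rintro ⟨B', hdiv, N, hN, hNB⟩ - -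
    refine ⟨N, hN, fun k hk => ?_⟩
    push_cast
    refine range_smulAddHom_mul_eq_of_smul_mem_of_divisible hNB fun x hx => ?_
    obtain ⟨y, -, hy⟩ := hdiv (N * k) (by positivity) x hx
    exact ⟨y, by exact_mod_cast hy⟩
end

section
/- For every inverse sequence ⋯ → A₃ → A₂ → A₁ of abelian groups satisfying the Mittag-Leffler condition, the first derived inverse limit lim¹ vanishes; concretely, the map ∏_n A_n → ∏_n A_n sending (a_n)_n to (a_n − φ_n(a_{n+1}))_n is surjective, where φ_n : A_{n+1} → A_n are the transition maps. -/
/-!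
Formally, `aₙ = ∑ₖ φₙ,ₙ₊ₖ (cₙ₊ₖ)` solves `aₙ - φₙ (aₙ₊₁) = cₙ`. Truncating the series beyond the
Mittag-Leffler indices leaves defects lying in the stable images `Bₙ` of the maps `Aₙ₊ₖ → Aₙ`.
Since `φₙ` maps `Bₙ₊₁` onto `Bₙ`, those defects are absorbed by a correction built recursively
inside the `Bₙ`.
-/

def transMap {A : ℕ → Type*} [∀ n, AddCommGroup (A n)] (φ : ∀ n, A (n + 1) →+ A n) :
    ∀ n k : ℕ, A (n + k) →+ A n
  | _, 0 => AddMonoidHom.id _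
  | n, k + 1 => (transMap φ n k).comp (φ (n + k))

section InverseSequence

variable {A : ℕ → Type*} [∀ n, AddCommGroup (A n)] (φ : ∀ n, A (n + 1) →+ A n)

/- Stated for a family `c` so that the two indices `n + 1 + k` and `n + (k + 1)`, which are
not definitionally equal, need no cast. -/
theorem map_transMap_apply (c : ∀ i, A i) (n k : ℕ) :
    φ n (transMap φ (n + 1) k (c (n + 1 + k))) = transMap φ n (k + 1) (c (n + (k + 1))) := by
  induction k generalizing c with
  | zero => rfl
  | succ k ih => exact ih fun i => φ i (c (i + 1))

theorem range_transMap_succ (n k : ℕ) :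
    (transMap φ n (k + 1)).range = (transMap φ (n + 1) k).range.map (φ n) := by
  classical
  ext y
  simp only [AddMonoidHom.mem_range, AddSubgroup.mem_map, exists_exists_eq_and]
  constructor
  · rintro ⟨x, rfl⟩
    refine ⟨Function.update (0 : ∀ i, A i) (n + (k + 1)) x (n + 1 + k), ?_⟩
    rw [map_transMap_apply, Function.update_self]
  · rintro ⟨x, rfl⟩
    refine ⟨Function.update (0 : ∀ i, A i) (n + 1 + k) x (n + (k + 1)), ?_⟩
    rw [← map_transMap_apply, Function.update_self]

theorem range_transMap_eq_of_le {n m j : ℕ}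
    (hm : ∀ k, (transMap φ n (m + k)).range = (transMap φ n m).range) (hj : m ≤ j) :
    (transMap φ n j).range = (transMap φ n m).range := by
  obtain ⟨k, rfl⟩ := Nat.exists_eq_add_of_le hj
  exact hm k

theorem map_range_transMap_of_stable {m : ℕ → ℕ}
    (hm : ∀ n k, (transMap φ n (m n + k)).range = (transMap φ n (m n)).range) (n : ℕ) :
    (transMap φ (n + 1) (m (n + 1))).range.map (φ n) = (transMap φ n (m n)).range := by
  rw [← range_transMap_eq_of_le φ (hm (n + 1)) (Nat.le_add_left _ (m n)),
    ← range_transMap_succ, range_transMap_eq_of_le φ (hm n) (by omega)]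

theorem exists_sub_map_eq_of_map_eq (B : ∀ n, AddSubgroup (A n))
    (hB : ∀ n, (B (n + 1)).map (φ n) = B n) (d : ∀ n, A n) (hd : ∀ n, d n ∈ B n) :
    ∃ b : ∀ n, A n, ∀ n, b n - φ n (b (n + 1)) = d n := by
  have lift : ∀ n (x : B n), ∃ y : B (n + 1), φ n y = x := by
    intro n x
    obtain ⟨y, hy, hyx⟩ := (hB n).ge x.2
    exact ⟨⟨y, hy⟩, hyx⟩
  choose f hf using lift
  let b : ∀ n, B n := fun n => Nat.rec 0 (fun n x => f n (x - ⟨d n, hd n⟩)) n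
  refine ⟨fun n => (b n).1, fun n => ?_⟩
  change (b n).1 - φ n (f n (b n - ⟨d n, hd n⟩)) = d n
  rw [hf]
  simp

def partialSum (c : ∀ n, A n) (M : ℕ → ℕ) (n : ℕ) : A n :=
  ∑ k ∈ Finset.range (M n), transMap φ n k (c (n + k))

theorem sub_partialSum_add_map_partialSum (c : ∀ n, A n) (M : ℕ → ℕ) (n : ℕ)
    (hM : M n ≤ M (n + 1) + 1) :
    c n - partialSum φ c M n + φ n (partialSum φ c M (n + 1)) =
      ∑ k ∈ Finset.Ico (M n) (M (n + 1) + 1), transMap φ n k (c (n + k)) := by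
  have hshift : φ n (partialSum φ c M (n + 1)) =
      ∑ k ∈ Finset.range (M (n + 1)), transMap φ n (k + 1) (c (n + (k + 1))) := by
    rw [partialSum, map_sum]
    exact Finset.sum_congr rfl fun k _ => map_transMap_apply φ c n k
  rw [Finset.sum_Ico_eq_sub _ hM, Finset.sum_range_succ', ← hshift, partialSum]
  -- the `k = 0` term `transMap φ n 0 (c (n + 0))` is `c n` up to definitional unfolding
  change _ = _ + c n - _
  abel

theorem sub_partialSum_add_map_partialSum_mem {m M : ℕ → ℕ}
    (hm : ∀ n k, (transMap φ n (m n + k)).range = (transMap φ n (m n)).range)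
    (hmM : m ≤ M) (hM : Monotone M) (c : ∀ n, A n) (n : ℕ) :
    c n - partialSum φ c M n + φ n (partialSum φ c M (n + 1)) ∈ (transMap φ n (m n)).range := by
  rw [sub_partialSum_add_map_partialSum φ c M n (Nat.le_succ_of_le (hM n.le_succ))]
  refine AddSubgroup.sum_mem _ fun k hk => ?_
  rw [← range_transMap_eq_of_le φ (hm n) ((hmM n).trans (Finset.mem_Ico.1 hk).1)]
  exact ⟨c (n + k), rfl⟩

end InverseSequence

/-- For an inverse sequence `⋯ → A₃ → A₂ → A₁` of abelian groups satisfying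
the Mittag-Leffler condition, `lim¹` vanishes: the map `∏ₙ Aₙ → ∏ₙ Aₙ`,
`(aₙ)ₙ ↦ (aₙ − φₙ(aₙ₊₁))ₙ`, is surjective. -/
theorem stmt_12 (A : ℕ → Type*) [∀ n, AddCommGroup (A n)] (φ : ∀ n, A (n + 1) →+ A n)
    (hML : ∀ n : ℕ, ∃ m : ℕ, ∀ k : ℕ,
      (transMap φ n (m + k)).range = (transMap φ n m).range) :
    Function.Surjective (fun (a : ∀ n, A n) => fun n => a n - φ n (a (n + 1))) := by
  intro c
  choose m hm using hML
  obtain ⟨b, hb⟩ := exists_sub_map_eq_of_map_eq φ _ (map_range_transMap_of_stable φ hm) _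
    (sub_partialSum_add_map_partialSum_mem φ hm (le_partialSups m) (partialSups m).monotone c)
  refine ⟨partialSum φ c (partialSups m) + b, funext fun n => ?_⟩
  set S := partialSum φ c (partialSups m)
  calc S n + b n - φ n (S (n + 1) + b (n + 1))
      = (b n - φ n (b (n + 1))) + S n - φ n (S (n + 1)) := by rw [map_add]; abel
    _ = c n := by rw [hb n]; abel
end

section
/- Consider the inverse system of copies of Z indexed by positive integers ordered by divisibility, with transition map from index mn to index n given by multiplication by m. Its inverse limit is 0, and its first derived limit lim¹ is isomorphic to (Ẑ ⊗_Z Q)/Q, where Ẑ = lim_n Z/nZ is the profinite completion of Z and Q embeds diagonally. -/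
/-!
Summing factorial expansions `∑ₖ aₖ k!` gives a surjection `∏ ℤ → Ẑ` (as `Ẑ = lim ℤ/n!` and
lifts of consecutive components differ by multiples of `n!`). Under it the image of `dFact` is
exactly `ℤ ⊆ Ẑ`: the series of `dFact b` telescopes to `b₀`, and conversely if the partial sums
of `a` are `≡ c` modulo `n!` then `bₙ := (c - ∑_{k<n} aₖ k!) / n!` is integral with `dFact b = a`.
So `lim¹ ≅ Ẑ/ℤ`. Finally `Ẑ/ℤ ≅ (Ẑ ⊗ ℚ)/ℚ` because `Ẑ` is torsion-free, `ℤ` is pure in `Ẑ`,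
and `Ẑ = N Ẑ + ℤ` for every `N ≠ 0`.
-/

/-- The profinite completion `Ẑ = lim_n ℤ/nℤ`, realized as the group of compatible systems. -/
def Zhat : AddSubgroup (∀ n : ℕ+, ZMod n) where
  carrier := {f | ∀ m n : ℕ+,
    ZMod.castHom (show ((n : ℕ+) : ℕ) ∣ ((m * n : ℕ+) : ℕ) by
      rw [PNat.mul_coe]; exact dvd_mul_left _ _) (ZMod n) (f (m * n)) = f n}
  zero_mem' := by intro m n; first | exact map_zero _ | exact RingHom.map_zero _ | simp [map_zero]
  add_mem' := by
    intro f g hf hg m n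
    simp only [Pi.add_apply, map_add, hf m n, hg m n]
  neg_mem' := by
    intro f hf m n
    simp only [Pi.neg_apply, map_neg, hf m n]

def ZhatOne : Zhat := ⟨fun _ => 1, fun _ _ => map_one _⟩

noncomputable def Qdiag : ℚ →+ TensorProduct ℤ Zhat ℚ :=
  ((TensorProduct.mk ℤ Zhat ℚ) ZhatOne).toAddMonoidHom

/-- The `lim¹`-complex differential `∏ ℤ → ∏ ℤ` for the cofinal sequence of factorials in the
divisibility order (the transition map from `(n+1)!` to `n!` is multiplication by `n + 1`). -/
def dFact : (ℕ → ℤ) →+ (ℕ → ℤ) where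
  toFun a := fun n => a n - ((n : ℤ) + 1) * a (n + 1)
  map_zero' := by funext n; simp
  map_add' a b := by funext n; simp; ring

open Nat TensorProduct

theorem eq_zero_of_natCast_mul_eq (f : ℕ+ → ℤ)
    (hf : ∀ m n : ℕ+, ((m : ℕ) : ℤ) * f (m * n) = f n) : f = 0 := by
  funext n
  let m : ℕ+ := ⟨(f n).natAbs + 1, Nat.succ_pos _⟩
  exact Int.eq_zero_of_dvd_of_natAbs_lt_natAbs ⟨f (m * n), (hf m n).symm⟩
    (by rw [Int.natAbs_natCast]; exact Nat.lt_succ_self _)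

section RatTensor

variable {A : Type*} [AddCommGroup A]

theorem tmul_one_injective [IsAddTorsionFree A] :
    Function.Injective fun a : A => a ⊗ₜ[ℤ] (1 : ℚ) := by
  intro a b h
  apply Module.Flat.tensorProduct_mk_injective ℤ A ℚ
  simpa using congrArg (TensorProduct.comm ℤ A ℚ) h

variable (e : A)

noncomputable def toTensorRatQuot :
    A →+ (A ⊗[ℤ] ℚ) ⧸ (TensorProduct.mk ℤ A ℚ e).toAddMonoidHom.range :=
  (QuotientAddGroup.mk' _).comp ((TensorProduct.mk ℤ A ℚ).flip 1).toAddMonoidHom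

theorem toTensorRatQuot_apply (a : A) :
    toTensorRatQuot e a = QuotientAddGroup.mk (a ⊗ₜ[ℤ] (1 : ℚ)) := rfl

theorem ker_toTensorRatQuot [IsAddTorsionFree A]
    (hpure : ∀ ⦃N : ℕ⦄, N ≠ 0 → ∀ ⦃a : A⦄, N • a ∈ AddSubgroup.zmultiples e →
      a ∈ AddSubgroup.zmultiples e) :
    (toTensorRatQuot e).ker = AddSubgroup.zmultiples e := by
  ext a
  rw [AddMonoidHom.mem_ker, toTensorRatQuot_apply, QuotientAddGroup.eq_zero_iff]
  constructor
  · rintro ⟨q, hq⟩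
    refine hpure q.den_nz ⟨q.num, tmul_one_injective ?_⟩
    calc (q.num • e) ⊗ₜ[ℤ] (1 : ℚ) = e ⊗ₜ (q.den • q) := by
          rw [smul_tmul, zsmul_one, nsmul_eq_mul, Rat.den_mul_eq_num]
      _ = (q.den • a) ⊗ₜ (1 : ℚ) := by
          rw [tmul_smul, ← smul_tmul', ← hq]; rfl
  · rintro ⟨c, rfl⟩
    exact ⟨c, by simp [smul_tmul]⟩

theorem toTensorRatQuot_surjective
    (hdiv : ∀ ⦃N : ℕ⦄, N ≠ 0 → ∀ a : A, ∃ (y : A) (c : ℤ), a = N • y + c • e) :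
    Function.Surjective (toTensorRatQuot e) := by
  intro x
  obtain ⟨t, rfl⟩ := QuotientAddGroup.mk_surjective x
  induction t using TensorProduct.induction_on with
  | zero => exact ⟨0, map_zero _⟩
  | tmul a q =>
    obtain ⟨y, c, hyc⟩ := hdiv q.den_nz (q.num • a)
    have hsplit : a ⊗ₜ[ℤ] q = y ⊗ₜ (1 : ℚ) + e ⊗ₜ (c • (q.den : ℚ)⁻¹) := by
      calc a ⊗ₜ[ℤ] q = (q.num • a) ⊗ₜ (q.den : ℚ)⁻¹ := by
            rw [smul_tmul, zsmul_eq_mul, ← div_eq_mul_inv, Rat.num_div_den]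
        _ = y ⊗ₜ (1 : ℚ) + e ⊗ₜ (c • (q.den : ℚ)⁻¹) := by
            rw [hyc, add_tmul, smul_tmul, smul_tmul, nsmul_eq_mul,
              mul_inv_cancel₀ (by exact_mod_cast q.den_nz)]
    refine ⟨y, (QuotientAddGroup.eq_iff_sub_mem).2 ⟨-(c • (q.den : ℚ)⁻¹), ?_⟩⟩
    simp [hsplit, tmul_neg]
  | add s t hs ht =>
    obtain ⟨a, ha⟩ := hs
    obtain ⟨b, hb⟩ := ht
    exact ⟨a + b, by rw [map_add, ha, hb]; rfl⟩

noncomputable def quotientZMultiplesEquivTensorRat [IsAddTorsionFree A]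
    (hdiv : ∀ ⦃N : ℕ⦄, N ≠ 0 → ∀ a : A, ∃ (y : A) (c : ℤ), a = N • y + c • e)
    (hpure : ∀ ⦃N : ℕ⦄, N ≠ 0 → ∀ ⦃a : A⦄, N • a ∈ AddSubgroup.zmultiples e →
      a ∈ AddSubgroup.zmultiples e) :
    A ⧸ AddSubgroup.zmultiples e ≃+
      (A ⊗[ℤ] ℚ) ⧸ (TensorProduct.mk ℤ A ℚ e).toAddMonoidHom.range :=
  (QuotientAddGroup.quotientAddEquivOfEq (ker_toTensorRatQuot e hpure).symm).trans
    (QuotientAddGroup.quotientKerEquivOfSurjective _ (toTensorRatQuot_surjective e hdiv))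

end RatTensor

namespace Zhat

theorem apply_eq_of_dvd (z : Zhat) {a b : ℕ+} (hab : (a : ℕ) ∣ b) :
    ZMod.castHom hab (ZMod a) (z.1 b) = z.1 a := by
  obtain ⟨d, hd⟩ := hab
  have hd0 : 0 < d := Nat.pos_of_mul_pos_left (hd ▸ b.pos)
  let d' : ℕ+ := ⟨d, hd0⟩
  obtain rfl : b = d' * a := PNat.eq (by rw [PNat.mul_coe, hd, mul_comm]; rfl)
  exact z.2 _ a

theorem apply_eq_intCast_of_dvd (z : Zhat) {a b : ℕ+} (hab : (a : ℕ) ∣ b) {k : ℤ}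
    (hk : z.1 b = k) : z.1 a = k := by
  rw [← apply_eq_of_dvd z hab, hk, map_intCast]

def mk (T : ℕ+ → ℤ) (hT : ∀ m n : ℕ+, ((n : ℕ) : ℤ) ∣ T (m * n) - T n) : Zhat :=
  ⟨fun n => T n, fun m n => by
    rw [map_intCast, ZMod.intCast_eq_intCast_iff_dvd_sub, dvd_sub_comm]
    exact hT m n⟩

theorem zsmul_one_apply (c : ℤ) (n : ℕ+) : (c • ZhatOne).1 n = c := by
  show c • (1 : ZMod n) = c
  rw [zsmul_eq_mul, mul_one]

theorem eq_zero_of_nsmul_eq_zero {N : ℕ} (hN : N ≠ 0) {z : Zhat} (h : N • z = 0) : z = 0 := by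
  let N' : ℕ+ := ⟨N, Nat.pos_of_ne_zero hN⟩
  ext m
  show z.1 m = 0
  obtain ⟨k, hk⟩ := ZMod.intCast_surjective (z.1 (N' * m))
  rw [apply_eq_intCast_of_dvd z (b := N' * m) ⟨N, mul_comm _ _⟩ hk.symm]
  have hNk : ((N * k : ℤ) : ZMod (N' * m : ℕ+)) = 0 := by
    rw [Int.cast_mul, Int.cast_natCast, ← nsmul_eq_mul, hk]
    exact congrArg (fun w : Zhat => w.1 (N' * m)) h
  rw [ZMod.intCast_zmod_eq_zero_iff_dvd, PNat.mul_coe, Nat.cast_mul] at hNk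
  exact (ZMod.intCast_zmod_eq_zero_iff_dvd _ _).2
    ((mul_dvd_mul_iff_left (by exact_mod_cast hN)).1 hNk)

instance : IsAddTorsionFree Zhat where
  nsmul_right_injective _ hN _ _ h :=
    sub_eq_zero.1 (eq_zero_of_nsmul_eq_zero hN (by rw [nsmul_sub]; exact sub_eq_zero.2 h))

theorem mem_zmultiples_of_nsmul_mem {N : ℕ} (hN : N ≠ 0) {z : Zhat}
    (h : N • z ∈ AddSubgroup.zmultiples ZhatOne) : z ∈ AddSubgroup.zmultiples ZhatOne := by
  obtain ⟨c, hc⟩ := AddSubgroup.mem_zmultiples_iff.1 h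
  let N' : ℕ+ := ⟨N, Nat.pos_of_ne_zero hN⟩
  have hc0 : (c : ZMod (N' : ℕ)) = 0 := by
    have hN0 : (N : ZMod (N' : ℕ)) = 0 := ZMod.natCast_self _
    rw [← zsmul_one_apply c N', hc]
    show N • z.1 N' = 0
    rw [nsmul_eq_mul, hN0, zero_mul]
  obtain ⟨d, rfl⟩ := (ZMod.intCast_zmod_eq_zero_iff_dvd _ _).1 hc0
  refine AddSubgroup.mem_zmultiples_iff.2 ⟨d, (nsmul_right_inj hN).1 ?_⟩
  rw [← hc, ← natCast_zsmul, smul_smul]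
  rfl

theorem exists_eq_nsmul_add_zsmul_one {N : ℕ} (hN : N ≠ 0) (z : Zhat) :
    ∃ (y : Zhat) (c : ℤ), z = N • y + c • ZhatOne := by
  let N' : ℕ+ := ⟨N, Nat.pos_of_ne_zero hN⟩
  obtain ⟨c, hc⟩ := ZMod.intCast_surjective (z.1 N')
  let u := z - c • ZhatOne
  have hu : ∀ n, u.1 n = z.1 n - c := fun n => by
    show z.1 n - (c • ZhatOne).1 n = _
    rw [zsmul_one_apply]
  choose k hk using fun m : ℕ+ => ZMod.intCast_surjective (u.1 (m * N'))
  have hk_dvd : ∀ m, (N : ℤ) ∣ k m := fun m => by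
    have := apply_eq_intCast_of_dvd u ⟨m, mul_comm _ _⟩ (hk m).symm
    rw [hu, ← hc, sub_self, eq_comm] at this
    exact (ZMod.intCast_zmod_eq_zero_iff_dvd _ _).1 this
  choose j hj using hk_dvd
  have hj_compat : ∀ m n : ℕ+, ((n : ℕ) : ℤ) ∣ j (m * n) - j n := fun m n => by
    have h := apply_eq_intCast_of_dvd u (a := n * N') (b := m * n * N')
      ⟨m, by simp [mul_comm, mul_assoc]⟩ (hk _).symm
    rw [← hk n, ZMod.intCast_eq_intCast_iff_dvd_sub, hj, hj, ← mul_sub, PNat.mul_coe,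
      Nat.cast_mul, mul_comm] at h
    exact (mul_dvd_mul_iff_left (by exact_mod_cast hN)).1 h
  refine ⟨mk j hj_compat, c, ?_⟩
  ext m
  have hm := apply_eq_intCast_of_dvd u ⟨N, rfl⟩ (hk m).symm
  rw [hu, hj, sub_eq_iff_eq_add] at hm
  show z.1 m = N • (j m : ZMod m) + (c • ZhatOne).1 m
  rw [zsmul_one_apply, hm]
  push_cast
  rw [nsmul_eq_mul]

end Zhat

def factorialSum (a : ℕ → ℤ) (n : ℕ) : ℤ := ∑ k ∈ Finset.range n, (k ! : ℤ) * a k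

theorem factorialSum_succ (a : ℕ → ℤ) (n : ℕ) :
    factorialSum a (n + 1) = factorialSum a n + (n ! : ℤ) * a n :=
  Finset.sum_range_succ _ n

theorem factorialSum_add (a b : ℕ → ℤ) (n : ℕ) :
    factorialSum (a + b) n = factorialSum a n + factorialSum b n := by
  simp only [factorialSum, Pi.add_apply, mul_add, Finset.sum_add_distrib]

theorem factorial_dvd_factorialSum_sub (a : ℕ → ℤ) {m n : ℕ} (h : m ≤ n) :
    (m ! : ℤ) ∣ factorialSum a n - factorialSum a m := by
  rw [factorialSum, factorialSum, ← Finset.sum_Ico_eq_sub _ h]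
  exact Finset.dvd_sum fun k hk => dvd_mul_of_dvd_left
    (Int.natCast_dvd_natCast.2 (Nat.factorial_dvd_factorial (Finset.mem_Ico.1 hk).1)) _

theorem factorialSum_dFact (b : ℕ → ℤ) (n : ℕ) :
    factorialSum (dFact b) n = b 0 - n ! * b n := by
  induction n with
  | zero => simp [factorialSum]
  | succ n ih =>
    rw [factorialSum_succ, ih, Nat.factorial_succ]
    show _ + _ * (b n - ((n : ℤ) + 1) * b (n + 1)) = _
    push_cast
    ring

/-- `∑ₖ aₖ k!`, which converges in `Ẑ` since `n ∣ k!` for `k ≥ n`. -/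
def factorialSeries : (ℕ → ℤ) →+ Zhat :=
  AddMonoidHom.mk' (fun a => Zhat.mk (fun n => factorialSum a n) fun m n =>
      (Int.natCast_dvd_natCast.2 (Nat.dvd_factorial n.pos le_rfl)).trans
        (factorial_dvd_factorialSum_sub a
          (by rw [PNat.mul_coe]; exact Nat.le_mul_of_pos_left _ m.pos)))
    fun a b => by
      ext n
      show ((factorialSum (a + b) n : ℤ) : ZMod n) = factorialSum a n + factorialSum b n
      rw [factorialSum_add, Int.cast_add]

theorem factorialSeries_apply (a : ℕ → ℤ) (n : ℕ+) :
    (factorialSeries a).1 n = factorialSum a n := rfl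

theorem factorialSeries_dFact (b : ℕ → ℤ) : factorialSeries (dFact b) = b 0 • ZhatOne := by
  ext n
  rw [factorialSeries_apply, Zhat.zsmul_one_apply, factorialSum_dFact, Int.cast_sub,
    Int.cast_mul, Int.cast_natCast, (ZMod.natCast_eq_zero_iff _ _).2
      (Nat.dvd_factorial n.pos le_rfl), zero_mul, sub_zero]

theorem factorial_dvd_sub_factorialSum {a : ℕ → ℤ} {c : ℤ}
    (h : factorialSeries a = c • ZhatOne) (n : ℕ) : (n ! : ℤ) ∣ c - factorialSum a n := by
  let F : ℕ+ := ⟨n !, n.factorial_pos⟩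
  have hc : (factorialSeries a).1 F = (c • ZhatOne).1 F := by rw [h]
  rw [factorialSeries_apply, Zhat.zsmul_one_apply] at hc
  rw [← sub_add_sub_cancel c (factorialSum a n !)]
  exact dvd_add ((ZMod.intCast_eq_intCast_iff_dvd_sub _ _ _).1 hc)
    (factorial_dvd_factorialSum_sub a n.self_le_factorial)

theorem mem_range_dFact_of_factorialSeries_eq {a : ℕ → ℤ} {c : ℤ}
    (h : factorialSeries a = c • ZhatOne) : a ∈ dFact.range := by
  choose b hb using factorial_dvd_sub_factorialSum h
  refine ⟨b, funext fun n => mul_left_cancel₀ (Int.natCast_ne_zero.2 n.factorial_ne_zero) ?_⟩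
  show (n ! : ℤ) * (b n - ((n : ℤ) + 1) * b (n + 1)) = n ! * a n
  have hb1 := hb (n + 1)
  rw [factorialSum_succ, Nat.factorial_succ] at hb1
  push_cast at hb1
  linear_combination hb1 - hb n

theorem factorialSeries_surjective : Function.Surjective factorialSeries := by
  intro z
  let F : ℕ → ℕ+ := fun n => ⟨n !, n.factorial_pos⟩
  let T : ℕ → ℤ := fun n => (z.1 (F n)).val
  have hT : ∀ n, (T n : ZMod (F n)) = z.1 (F n) := fun n => by
    rw [Int.cast_natCast, ZMod.natCast_zmod_val]
  have hT0 : T 0 = 0 := by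
    show ((z.1 (F 0)).val : ℤ) = 0
    exact_mod_cast Nat.lt_one_iff.1 (ZMod.val_lt (z.1 (F 0)))
  have hT_dvd : ∀ n, (n ! : ℤ) ∣ T (n + 1) - T n := fun n => by
    have := Zhat.apply_eq_intCast_of_dvd z (a := F n) (b := F (n + 1))
      (Nat.factorial_dvd_factorial n.le_succ) (hT (n + 1)).symm
    exact (ZMod.intCast_eq_intCast_iff_dvd_sub _ _ _).1 ((hT n).trans this)
  choose a ha using hT_dvd
  have hsum : ∀ n, factorialSum a n = T n := fun n => by
    induction n with
    | zero => simp [factorialSum, hT0]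
    | succ n ih => rw [factorialSum_succ, ih, ← ha]; ring
  refine ⟨a, ?_⟩
  ext m
  rw [factorialSeries_apply, hsum]
  exact (Zhat.apply_eq_intCast_of_dvd z (Nat.dvd_factorial m.pos le_rfl) (hT m).symm).symm

def factorialSeriesMod : (ℕ → ℤ) →+ Zhat ⧸ AddSubgroup.zmultiples ZhatOne :=
  (QuotientAddGroup.mk' _).comp factorialSeries

theorem ker_factorialSeriesMod : factorialSeriesMod.ker = dFact.range := by
  ext a
  rw [AddMonoidHom.mem_ker, factorialSeriesMod, AddMonoidHom.comp_apply,
    QuotientAddGroup.mk'_apply, QuotientAddGroup.eq_zero_iff, AddSubgroup.mem_zmultiples_iff]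
  constructor
  · rintro ⟨c, hc⟩
    exact mem_range_dFact_of_factorialSeries_eq hc.symm
  · rintro ⟨b, rfl⟩
    exact ⟨b 0, (factorialSeries_dFact b).symm⟩

theorem factorialSeriesMod_surjective : Function.Surjective factorialSeriesMod :=
  (QuotientAddGroup.mk'_surjective _).comp factorialSeries_surjective

noncomputable def quotientRangeDFactEquiv :
    (ℕ → ℤ) ⧸ dFact.range ≃+ Zhat ⧸ AddSubgroup.zmultiples ZhatOne :=
  (QuotientAddGroup.quotientAddEquivOfEq ker_factorialSeriesMod.symm).trans
    (QuotientAddGroup.quotientKerEquivOfSurjective _ factorialSeriesMod_surjective)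

/-- Consider the inverse system of copies of `ℤ` indexed by positive integers
ordered by divisibility, with transition map from index `m*n` to index `n` given by
multiplication by `m`. Its inverse limit is `0`, and its first derived limit `lim¹` — computed
via the cofinal sequence of factorials (`n ∣ n!` for `n ≥ 1`), as the cokernel of the map
`∏ℤ → ∏ℤ`, `(aₙ) ↦ (aₙ − (n+1)·aₙ₊₁)` — is isomorphic to `(Ẑ ⊗ ℚ)/ℚ`, where `ℚ` embeds
diagonally. -/
theorem stmt_13 :
    (∀ f : ℕ+ → ℤ, (∀ m n : ℕ+, ((m : ℕ) : ℤ) * f (m * n) = f n) → f = 0) ∧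
    (∀ n : ℕ+, ∃ m : ℕ, ((n : ℕ+) : ℕ) ∣ m.factorial) ∧
    Nonempty (((ℕ → ℤ) ⧸ dFact.range) ≃+
      (TensorProduct ℤ Zhat ℚ ⧸ Qdiag.range)) :=
  ⟨eq_zero_of_natCast_mul_eq, fun n => ⟨n, Nat.dvd_factorial n.pos le_rfl⟩,
    ⟨quotientRangeDFactEquiv.trans (quotientZMultiplesEquivTensorRat ZhatOne
      @Zhat.exists_eq_nsmul_add_zsmul_one @Zhat.mem_zmultiples_of_nsmul_mem)⟩⟩
end

section
/- Let 0 → F → W → E' → 0 and 0 → E → W → F' → G → G' → 0 be exact sequences in an abelian category (with the same middle object W), and suppose the composite F → W → F' is injective (a monomorphism). Then the composite E → W → E' is injective, and there is an exact sequence 0 → coker(E ↪ E') → coker(F ↪ F') → ker(G ↠ G') → 0. -/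
/-!
Since `q` is surjective with kernel `i F`, the map `w ↦ [r w]` into `F' ⧸ r(i F)` descends to
`E'`, and it kills `q(j E)` because `r ∘ j = 0`; this is `α`, and `β` is induced by `s`.
Injectivity of `α` is the diagram chase: if `r w = r (i f)`, then `w - i f ∈ ker r = j E`,
so `q w = q (w - i f) ∈ q(j E)`.
-/

open Function QuotientAddGroup

section CokernelMap

variable {F W E' E F' G : Type*} [AddCommGroup F] [AddCommGroup W] [AddCommGroup E']
  [AddCommGroup E] [AddCommGroup F'] [AddCommGroup G]
  {i : F →+ W} {q : W →+ E'} {j : E →+ W} {r : W →+ F'}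

theorem injective_comp_of_exact_of_injective_comp (hiq : Exact i q) (hj : Injective j)
    (hjr : Exact j r) (hri : Injective (r.comp i)) : Injective (q.comp j) := by
  rw [injective_iff_map_eq_zero]
  intro e he
  obtain ⟨f, hf⟩ := (hiq (j e)).mp he
  have hf0 : f = 0 := (injective_iff_map_eq_zero _).mp hri f <| by
    rw [AddMonoidHom.comp_apply, hf]
    exact hjr.apply_apply_eq_zero e
  exact (injective_iff_map_eq_zero _).mp hj e (by rw [← hf, hf0, map_zero])

noncomputable def liftCokernel (hiq : Exact i q) (hq : Surjective q) :
    E' →+ F' ⧸ (r.comp i).range :=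
  q.liftOfSurjective hq ⟨(mk' _).comp r, fun w hw => by
    obtain ⟨f, rfl⟩ := (hiq w).mp hw
    exact (eq_zero_iff _).mpr ⟨f, rfl⟩⟩

theorem liftCokernel_apply (hiq : Exact i q) (hq : Surjective q) (w : W) :
    liftCokernel (r := r) hiq hq (q w) = (r w : F' ⧸ (r.comp i).range) :=
  q.liftOfRightInverse_comp_apply _ _ _ w

noncomputable def cokernelMap (hiq : Exact i q) (hq : Surjective q) (hrj : ∀ e, r (j e) = 0) :
    E' ⧸ (q.comp j).range →+ F' ⧸ (r.comp i).range :=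
  lift _ (liftCokernel hiq hq) <| by
    rintro _ ⟨e, rfl⟩
    rw [AddMonoidHom.comp_apply, AddMonoidHom.mem_ker, liftCokernel_apply, hrj,
      QuotientAddGroup.mk_zero]

theorem cokernelMap_mk (hiq : Exact i q) (hq : Surjective q) (hrj : ∀ e, r (j e) = 0) (w : W) :
    cokernelMap hiq hq hrj (q w : E' ⧸ (q.comp j).range) = (r w : F' ⧸ (r.comp i).range) :=
  liftCokernel_apply hiq hq w

theorem injective_cokernelMap (hiq : Exact i q) (hq : Surjective q) (hjr : Exact j r) :
    Injective (cokernelMap hiq hq hjr.apply_apply_eq_zero) := by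
  rw [injective_iff_map_eq_zero]
  intro c hc
  induction c using QuotientAddGroup.induction_on with
  | H e' =>
    obtain ⟨w, rfl⟩ := hq e'
    rw [cokernelMap_mk, eq_zero_iff] at hc
    obtain ⟨f, hf⟩ := hc
    obtain ⟨e, he⟩ := (hjr (w - i f)).mp <| by
      rw [map_sub, ← AddMonoidHom.comp_apply, hf, sub_self]
    refine (eq_zero_iff _).mpr ⟨e, ?_⟩
    rw [AddMonoidHom.comp_apply, he, map_sub, hiq.apply_apply_eq_zero, sub_zero]

theorem exact_cokernelMap_lift (hiq : Exact i q) (hq : Surjective q) (hrj : ∀ e, r (j e) = 0)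
    {s : F' →+ G} (hrs : Exact r s) (hs : (r.comp i).range ≤ s.ker) :
    Exact (cokernelMap hiq hq hrj) (lift _ s hs) := by
  intro c
  induction c using QuotientAddGroup.induction_on with
  | H f' =>
    rw [lift_mk]
    constructor
    · intro hf'
      obtain ⟨w, rfl⟩ := (hrs f').mp hf'
      exact ⟨(q w : E' ⧸ (q.comp j).range), cokernelMap_mk hiq hq hrj w⟩
    · rintro ⟨d, hd⟩
      induction d using QuotientAddGroup.induction_on with
      | H e' =>
        obtain ⟨w, rfl⟩ := hq e'
        rw [cokernelMap_mk, QuotientAddGroup.eq] at hd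
        obtain ⟨f, hf⟩ := hd
        rw [AddMonoidHom.comp_apply, eq_neg_add_iff_add_eq] at hf
        rw [← hf, map_add, hrs.apply_apply_eq_zero, hrs.apply_apply_eq_zero, add_zero]

end CokernelMap

theorem stmt_15_general (F W E' E F' G G' : Type*)
    [AddCommGroup F] [AddCommGroup W] [AddCommGroup E'] [AddCommGroup E]
    [AddCommGroup F'] [AddCommGroup G] [AddCommGroup G']
    (i : F →+ W) (q : W →+ E')
    (j : E →+ W) (r : W →+ F') (s : F' →+ G) (t : G →+ G')
    (hiq : Function.Exact i q) (hq : Function.Surjective q)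
    (hj : Function.Injective j) (hjr : Function.Exact j r) (hrs : Function.Exact r s)
    (hst : Function.Exact s t)
    (hri : Function.Injective (r.comp i)) :
    Function.Injective (q.comp j) ∧
    ∃ (α : E' ⧸ (q.comp j).range →+ F' ⧸ (r.comp i).range)
      (β : F' ⧸ (r.comp i).range →+ G),
      -- `α` is induced by the given data: it sends the class of `q w` to the class of `r w`
      (∀ w : W, α (QuotientAddGroup.mk (q w)) = QuotientAddGroup.mk (r w)) ∧
      -- `β` is induced by `s`
      (∀ f' : F', β (QuotientAddGroup.mk f') = s f') ∧
      -- exactness of `0 → coker(E ↪ E') → coker(F ↪ F') → ker(G ↠ G') → 0`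
      Function.Injective α ∧
      Function.Exact α β ∧
      (∀ c, t (β c) = 0) ∧
      (∀ g : G, t g = 0 → ∃ c, β c = g) := by
  have hs : (r.comp i).range ≤ s.ker := by
    rintro _ ⟨f, rfl⟩
    exact hrs.apply_apply_eq_zero (i f)
  refine ⟨injective_comp_of_exact_of_injective_comp hiq hj hjr hri,
    cokernelMap hiq hq hjr.apply_apply_eq_zero, lift _ s hs, cokernelMap_mk hiq hq _,
    fun _ => rfl, injective_cokernelMap hiq hq hjr, exact_cokernelMap_lift hiq hq _ hrs hs,
    fun c => ?_, fun g hg => ?_⟩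
  · induction c using QuotientAddGroup.induction_on with
    | H f' => exact hst.apply_apply_eq_zero f'
  · obtain ⟨f', rfl⟩ := (hst g).mp hg
    exact ⟨f', rfl⟩

/-- Let `0 → F →ⁱ W →^q E' → 0` and `0 → E →ʲ W →ʳ F' →ˢ G →ᵗ G' → 0` be
exact sequences of abelian groups with the same middle object `W`, and suppose the composite
`F → W → F'` is injective. Then the composite `E → W → E'` is injective, and there is an exact
sequence `0 → coker(E ↪ E') → coker(F ↪ F') → ker(G ↠ G') → 0`, where the maps are the
induced ones: `α` is induced by `w ↦ r w` via `q`, and `β` is induced by `s`. -/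
theorem stmt_15 (F W E' E F' G G' : Type*)
    [AddCommGroup F] [AddCommGroup W] [AddCommGroup E'] [AddCommGroup E]
    [AddCommGroup F'] [AddCommGroup G] [AddCommGroup G']
    (i : F →+ W) (q : W →+ E')
    (j : E →+ W) (r : W →+ F') (s : F' →+ G) (t : G →+ G')
    (hi : Function.Injective i) (hiq : Function.Exact i q) (hq : Function.Surjective q)
    (hj : Function.Injective j) (hjr : Function.Exact j r) (hrs : Function.Exact r s)
    (hst : Function.Exact s t) (ht : Function.Surjective t)
    (hri : Function.Injective (r.comp i)) :
    Function.Injective (q.comp j) ∧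
    ∃ (α : E' ⧸ (q.comp j).range →+ F' ⧸ (r.comp i).range)
      (β : F' ⧸ (r.comp i).range →+ G),
      -- `α` is induced by the given data: it sends the class of `q w` to the class of `r w`
      (∀ w : W, α (QuotientAddGroup.mk (q w)) = QuotientAddGroup.mk (r w)) ∧
      -- `β` is induced by `s`
      (∀ f' : F', β (QuotientAddGroup.mk f') = s f') ∧
      -- exactness of `0 → coker(E ↪ E') → coker(F ↪ F') → ker(G ↠ G') → 0`
      Function.Injective α ∧
      Function.Exact α β ∧
      (∀ c, t (β c) = 0) ∧
      (∀ g : G, t g = 0 → ∃ c, β c = g) :=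
  stmt_15_general F W E' E F' G G' i q j r s t hiq hq hj hjr hrs hst hri
end

section
/- Let A be an abelian group possessing a divisible subgroup D such that A/D is killed by multiplication by some positive integer N. Then the natural map A/D → lim_n A/nA (inverse limit over positive integers n ordered by divisibility, with the natural projections A/mnA → A/nA) is an isomorphism; in particular the profinite-style completion lim_n A/nA of A equals the quotient of A by its maximal divisible subgroup. -/
/-!
Write `S n = nA`. Since `A/D` is killed by `N`, we have `NA ⊆ D`; since `D` is divisible,
`D ⊆ nA` for every `n`. Hence `D = ⋂ₙ nA`, which is injectivity. For surjectivity, a compatible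
system `c` is represented modulo `NA` by some `a`; for any `n`, a representative `b` of
`c (N n)` agrees with `a` modulo `NA ⊆ nA`, so `a` also represents `c n`.
-/

open QuotientAddGroup

section

variable {A : Type*} [AddCommGroup A]

theorem forall_mk_eq_mk_iff_sub_mem {ι : Type*} {S : ι → AddSubgroup A} {D : AddSubgroup A}
    {i₀ : ι} (hS : S i₀ ≤ D) (hD : ∀ i, D ≤ S i) (a b : A) :
    (∀ i, (mk a : A ⧸ S i) = mk b) ↔ a - b ∈ D := by
  simp only [eq_iff_sub_mem]
  exact ⟨fun h => hS (h i₀), fun h i => hD i h⟩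

theorem exists_forall_mk_eq_of_compatible {ι : Type*} [CommMagma ι] {S : ι → AddSubgroup A}
    {i₀ : ι} (h₀ : ∀ i, S i₀ ≤ S i) (c : ∀ i, A ⧸ S i)
    (hc : ∀ i j a, (mk a : A ⧸ S (i * j)) = c (i * j) → (mk a : A ⧸ S j) = c j) :
    ∃ a, ∀ i, (mk a : A ⧸ S i) = c i := by
  obtain ⟨a, ha⟩ := mk_surjective (c i₀)
  refine ⟨a, fun i => ?_⟩
  obtain ⟨b, hb⟩ := mk_surjective (c (i₀ * i))
  have hb₀ : (mk b : A ⧸ S i₀) = c i₀ := hc i i₀ b (by rwa [mul_comm])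
  have hab : a - b ∈ S i := h₀ i (eq_iff_sub_mem.1 (ha.trans hb₀.symm))
  exact (eq_iff_sub_mem.2 hab).trans (hc i₀ i b hb)

end

/-- Let `A` be an abelian group with a divisible subgroup `D` such that `A/D`
is killed by multiplication by some positive integer `N`. Then the natural map
`A/D → lim_n A/nA` (inverse limit over positive integers ordered by divisibility, with the
natural projections as transition maps) is an isomorphism: two elements of `A` have the same
image in every `A/nA` iff they differ by an element of `D` (injectivity of the induced map,
together with well-definedness), and every compatible system in `lim_n A/nA` comes from an
element of `A` (surjectivity). -/
theorem stmt_19 (A : Type*) [AddCommGroup A] (D : AddSubgroup A)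
    (hdiv : ∀ n : ℕ, 0 < n → ∀ x ∈ D, ∃ y ∈ D, (n : ℤ) • y = x)
    (N : ℕ) (hN : 0 < N) (hkill : ∀ a : A, (N : ℤ) • a ∈ D) :
    let S : ℕ+ → AddSubgroup A := fun n => (smulAddHom ℤ A ((n : ℕ) : ℤ)).range
    (∀ a b : A,
      (∀ n : ℕ+, (QuotientAddGroup.mk a : A ⧸ S n) = QuotientAddGroup.mk b) ↔ a - b ∈ D) ∧
    (∀ c : ∀ n : ℕ+, A ⧸ S n,
      (∀ m n : ℕ+, ∀ a : A, (QuotientAddGroup.mk a : A ⧸ S (m * n)) = c (m * n) →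
        (QuotientAddGroup.mk a : A ⧸ S n) = c n) →
      ∃ a : A, ∀ n : ℕ+, (QuotientAddGroup.mk a : A ⧸ S n) = c n) := by
  intro S
  have hSD : S ⟨N, hN⟩ ≤ D := by
    rintro _ ⟨a, rfl⟩
    exact hkill a
  have hDS : ∀ n, D ≤ S n := fun n x hx =>
    let ⟨y, _, hy⟩ := hdiv n n.pos x hx
    ⟨y, hy⟩
  exact ⟨forall_mk_eq_mk_iff_sub_mem hSD hDS,
    exists_forall_mk_eq_of_compatible fun n => hSD.trans (hDS n)⟩
end
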